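/- arXiv:2506.01115 — 3 statements merged into one kernel-verified Lean document; each statement's English description precedes it below -/
import Mathlib

section
/- Let n, m ≥ 1, let Φ ∈ ℝ^{m×m} be a fixed matrix, and let W be a random m×m real matrix with i.i.d. standard Gaussian N(0,1) entries. Let W̄ be the matrix with entries W̄_{μα} = (1/m)·Σ_{ν=1}^m W_{να}, set W̃ = W − W̄, and let A = I_m + (1/√(nm))·W̃. Then the entrywise expectation of Aᵀ Φ A satisfies E[Aᵀ Φ A] = Φ + (1/n)·( (1/m)·Tr(Φ) − M(Φ) )·I_m, where M(Φ) = (1/m²)·Σ_{α,β=1}^m Φ_{αβ}. -/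
open MeasureTheory ProbabilityTheory Matrix

/-!
Write `A = 1 + c • W̃` with `c = (n m)^{-1/2}`. The entry `(Aᵀ Φ A)_{γδ}` is `Φ_{γδ}`,
plus terms linear in `W̃`, which have mean zero, plus `c² ∑ᵢⱼ Φᵢⱼ W̃_{iγ} W̃_{jδ}`.
Now `W̃ = K W` for the centering matrix `K = 1 - J / m`, and the entries of `W` are
uncorrelated with unit variance, so `E[W̃_{iγ} W̃_{jδ}] = δ_{γδ} (K Kᵀ)ᵢⱼ = δ_{γδ} Kᵢⱼ`
because `K` is a symmetric projection. Summing against `Φ` gives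
`δ_{γδ} c² (Tr Φ - m M(Φ))`.
-/

/-- The column-centered matrix `W̃ = W − W̄`, where `W̄` replaces each entry
by the empirical average of its column. -/
noncomputable def centered (m : ℕ) (W : Fin m × Fin m → ℝ) :
    Matrix (Fin m) (Fin m) ℝ :=
  Matrix.of fun i j => W (i, j) - (1 / (m : ℝ)) * ∑ ν : Fin m, W (ν, j)

section WhiteNoise

variable {ι : Type*} [Fintype ι] {μ : Measure ℝ} [IsProbabilityMeasure μ]

lemma memLp_dotProduct (hμ : MemLp id 2 μ) (a : ι → ℝ) :
    MemLp (fun x : ι → ℝ => a ⬝ᵥ x) 2 (Measure.pi fun _ => μ) :=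
  memLp_finsetSum _ fun p _ =>
    (hμ.comp_measurePreserving (measurePreserving_eval _ p)).const_mul (a p)

lemma integral_dotProduct (hμ : MemLp id 2 μ) (hmean : ∫ y, y ∂μ = 0) (a : ι → ℝ) :
    ∫ x : ι → ℝ, a ⬝ᵥ x ∂(Measure.pi fun _ => μ) = 0 := by
  have hint (p : ι) : Integrable (fun x : ι → ℝ => x p) (Measure.pi fun _ => μ) :=
    integrable_eval (hμ.integrable one_le_two)
  simp only [dotProduct]
  rw [integral_finsetSum _ fun p _ => (hint p).const_mul (a p)]
  simp [integral_const_mul, integral_eval, hmean]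

lemma integral_eval_mul_eval [DecidableEq ι] (hmean : ∫ y, y ∂μ = 0)
    (hvar : ∫ y, y ^ 2 ∂μ = 1) (p q : ι) :
    ∫ x : ι → ℝ, x p * x q ∂(Measure.pi fun _ => μ) = if p = q then 1 else 0 := by
  split_ifs with hpq
  · subst hpq
    simp_rw [← sq]
    rw [integral_comp_eval (μ := fun _ : ι => μ) (f := fun y : ℝ => y ^ 2) (by fun_prop), hvar]
  · have hindep := (iIndepFun_pi (μ := fun _ : ι => μ) (X := fun _ => id)
      fun _ => aemeasurable_id).indepFun hpq
    have := hindep.integral_mul_eq_mul_integral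
      (measurable_pi_apply p).aestronglyMeasurable (measurable_pi_apply q).aestronglyMeasurable
    simp only [Pi.mul_apply, id] at this
    rw [this, integral_eval, hmean, zero_mul]

lemma integral_dotProduct_mul_dotProduct (hμ : MemLp id 2 μ) (hmean : ∫ y, y ∂μ = 0)
    (hvar : ∫ y, y ^ 2 ∂μ = 1) (a b : ι → ℝ) :
    ∫ x : ι → ℝ, (a ⬝ᵥ x) * (b ⬝ᵥ x) ∂(Measure.pi fun _ => μ) = a ⬝ᵥ b := by
  classical
  have hcoord (p : ι) := hμ.comp_measurePreserving (measurePreserving_eval (fun _ : ι => μ) p)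
  have hint (p q : ι) : Integrable (fun x : ι → ℝ => a p * b q * (x p * x q))
      (Measure.pi fun _ => μ) :=
    ((hcoord p).integrable_mul (hcoord q)).const_mul _
  have hexpand (x : ι → ℝ) :
      (a ⬝ᵥ x) * (b ⬝ᵥ x) = ∑ p, ∑ q, a p * b q * (x p * x q) := by
    simp_rw [dotProduct, Finset.sum_mul_sum, mul_mul_mul_comm]
  simp_rw [hexpand]
  rw [integral_finsetSum _ fun p _ => integrable_finsetSum _ fun q _ => hint p q]
  simp_rw [integral_finsetSum _ fun q _ => hint _ q]
  simp [integral_const_mul, integral_eval_mul_eval hmean hvar, dotProduct]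

end WhiteNoise

section RandomMatrix

variable {k r c : Type*} [Fintype r] [Fintype c] [DecidableEq c] {μ : Measure ℝ}
  [IsProbabilityMeasure μ]

lemma mul_of_apply_eq_dotProduct (K : Matrix k r ℝ) (W : r × c → ℝ) (i : k) (γ : c) :
    (K * Matrix.of fun a b => W (a, b)) i γ =
      (fun p : r × c => if p.2 = γ then K i p.1 else 0) ⬝ᵥ W := by
  simp [mul_apply, dotProduct, Fintype.sum_prod_type, ite_mul]

lemma integral_mul_of_apply_mul_mul_of_apply (hμ : MemLp id 2 μ) (hmean : ∫ y, y ∂μ = 0)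
    (hvar : ∫ y, y ^ 2 ∂μ = 1) (K L : Matrix k r ℝ) (i j : k) (γ δ : c) :
    ∫ W : r × c → ℝ, (K * Matrix.of fun a b => W (a, b)) i γ *
        (L * Matrix.of fun a b => W (a, b)) j δ ∂(Measure.pi fun _ => μ) =
      if γ = δ then (K * Lᵀ) i j else 0 := by
  simp_rw [mul_of_apply_eq_dotProduct]
  rw [integral_dotProduct_mul_dotProduct hμ hmean hvar]
  split_ifs with h
  · subst h
    simp [dotProduct, Fintype.sum_prod_type, mul_apply]
  · simp [dotProduct, Fintype.sum_prod_type, Ne.symm h]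

end RandomMatrix

noncomputable def centeringMatrix (m : ℕ) : Matrix (Fin m) (Fin m) ℝ :=
  1 - (1 / (m : ℝ)) • Matrix.of fun _ _ => 1

lemma centeringMatrix_apply (m : ℕ) (i j : Fin m) :
    centeringMatrix m i j = (if i = j then 1 else 0) - 1 / m := by
  simp [centeringMatrix, one_apply]

lemma centeringMatrix_transpose (m : ℕ) : (centeringMatrix m)ᵀ = centeringMatrix m := by
  ext i j
  simp [centeringMatrix_apply, eq_comm]

lemma centeringMatrix_mul_self (m : ℕ) :
    centeringMatrix m * centeringMatrix m = centeringMatrix m := by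
  ext i j
  have hm : (m : ℝ) ≠ 0 := Nat.cast_ne_zero.mpr i.pos.ne'
  simp only [mul_apply, centeringMatrix_apply, sub_mul, mul_sub, ite_mul, mul_ite, one_mul,
    mul_one, zero_mul, mul_zero, Finset.sum_sub_distrib, Finset.sum_ite_eq, Finset.sum_ite_eq',
    Finset.mem_univ, if_true, Finset.sum_const, Finset.card_univ, Fintype.card_fin, nsmul_eq_mul]
  field_simp
  ring

lemma sum_mul_centeringMatrix_apply (m : ℕ) (Φ : Matrix (Fin m) (Fin m) ℝ) :
    ∑ i, ∑ j, Φ i j * centeringMatrix m i j = Φ.trace - 1 / m * ∑ i, ∑ j, Φ i j := by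
  simp [centeringMatrix_apply, mul_sub, Finset.sum_sub_distrib, Finset.mul_sum, Finset.sum_mul,
    trace, mul_comm]

lemma centered_eq_centeringMatrix_mul (m : ℕ) (W : Fin m × Fin m → ℝ) :
    centered m W = centeringMatrix m * Matrix.of fun i j => W (i, j) := by
  ext i j
  simp [centered, mul_apply, centeringMatrix_apply, sub_mul, Finset.sum_sub_distrib,
    Finset.mul_sum]

section Centered

variable {m : ℕ} {μ : Measure ℝ} [IsProbabilityMeasure μ]

lemma memLp_centered_apply (hμ : MemLp id 2 μ) (i γ : Fin m) :
    MemLp (fun W => centered m W i γ) 2 (Measure.pi fun _ => μ) := by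
  simp_rw [centered_eq_centeringMatrix_mul, mul_of_apply_eq_dotProduct]
  exact memLp_dotProduct hμ _

lemma integral_centered_apply (hμ : MemLp id 2 μ) (hmean : ∫ y, y ∂μ = 0) (i γ : Fin m) :
    ∫ W, centered m W i γ ∂(Measure.pi fun _ => μ) = 0 := by
  simp_rw [centered_eq_centeringMatrix_mul, mul_of_apply_eq_dotProduct]
  exact integral_dotProduct hμ hmean _

lemma integral_centered_apply_mul_centered_apply (hμ : MemLp id 2 μ) (hmean : ∫ y, y ∂μ = 0)
    (hvar : ∫ y, y ^ 2 ∂μ = 1) (i j γ δ : Fin m) :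
    ∫ W, centered m W i γ * centered m W j δ ∂(Measure.pi fun _ => μ) =
      if γ = δ then centeringMatrix m i j else 0 := by
  simp_rw [centered_eq_centeringMatrix_mul]
  rw [integral_mul_of_apply_mul_mul_of_apply hμ hmean hvar, centeringMatrix_transpose,
    centeringMatrix_mul_self]

end Centered

lemma one_add_transpose_mul_mul_one_add_apply {n R : Type*} [Fintype n] [DecidableEq n]
    [CommRing R] (X Φ : Matrix n n R) (γ δ : n) :
    ((1 + X)ᵀ * Φ * (1 + X) : Matrix n n R) γ δ =
      Φ γ δ + (∑ i, X i γ * Φ i δ + ∑ j, Φ γ j * X j δ) +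
        ∑ i, ∑ j, Φ i j * (X i γ * X j δ) := by
  have : (1 + X)ᵀ * Φ * (1 + X) = Φ + (Xᵀ * Φ + Φ * X) + Xᵀ * Φ * X := by
    simp only [transpose_add, transpose_one, add_mul, mul_add, one_mul, mul_one]
    abel
  rw [this]
  simp only [Matrix.add_apply, mul_apply, transpose_apply, Finset.sum_mul]
  rw [Finset.sum_comm]
  simp only [mul_comm, mul_left_comm]

lemma integral_one_add_transpose_mul_mul_one_add_apply {n Ω : Type*} [Fintype n]
    [DecidableEq n] [MeasurableSpace Ω] {P : Measure Ω} [IsProbabilityMeasure P]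
    (X : Ω → Matrix n n ℝ) (hX : ∀ i j, MemLp (fun ω => X ω i j) 2 P)
    (hmean : ∀ i j, ∫ ω, X ω i j ∂P = 0) (Φ : Matrix n n ℝ) (γ δ : n) :
    ∫ ω, ((1 + X ω)ᵀ * Φ * (1 + X ω) : Matrix n n ℝ) γ δ ∂P =
      Φ γ δ + ∑ i, ∑ j, Φ i j * ∫ ω, X ω i γ * X ω j δ ∂P := by
  have hint (i j : n) : Integrable (fun ω => X ω i j) P := (hX i j).integrable one_le_two
  have hleft : Integrable (fun ω => ∑ i, X ω i γ * Φ i δ) P :=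
    integrable_finsetSum _ fun i _ => (hint i γ).mul_const _
  have hright : Integrable (fun ω => ∑ j, Φ γ j * X ω j δ) P :=
    integrable_finsetSum _ fun j _ => (hint j δ).const_mul _
  have hquad (i j : n) : Integrable (fun ω => Φ i j * (X ω i γ * X ω j δ)) P :=
    ((hX i γ).integrable_mul (hX j δ)).const_mul _
  have hquadSum : Integrable (fun ω => ∑ i, ∑ j, Φ i j * (X ω i γ * X ω j δ)) P :=
    integrable_finsetSum _ fun i _ => integrable_finsetSum _ fun j _ => hquad i j
  simp_rw [one_add_transpose_mul_mul_one_add_apply]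
  rw [integral_add ((integrable_const _).fun_add (hleft.fun_add hright)) hquadSum,
    integral_add (integrable_const _) (hleft.fun_add hright), integral_add hleft hright,
    integral_finsetSum _ fun i _ => (hint i γ).mul_const _,
    integral_finsetSum _ fun j _ => (hint j δ).const_mul _,
    integral_finsetSum _ fun i _ => integrable_finsetSum _ fun j _ => hquad i j]
  simp_rw [integral_finsetSum _ fun j _ => hquad _ j]
  simp [integral_const_mul, integral_mul_const, hmean]

lemma integral_sq_gaussianReal (m : ℝ) (v : NNReal) :
    ∫ x, x ^ 2 ∂gaussianReal m v = v + m ^ 2 := by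
  have h := variance_eq_sub (memLp_id_gaussianReal (μ := m) (v := v) 2)
  simp only [variance_id_gaussianReal, Pi.pow_apply, id_eq, integral_id_gaussianReal] at h
  linarith

theorem expectation_mixing_conjugation_general (n m : ℕ)
    (Φ : Matrix (Fin m) (Fin m) ℝ) (γ δ : Fin m) :
    (∫ W : Fin m × Fin m → ℝ,
        (((1 : Matrix (Fin m) (Fin m) ℝ) +
            (Real.sqrt ((n : ℝ) * m))⁻¹ • centered m W)ᵀ * Φ *
          ((1 : Matrix (Fin m) (Fin m) ℝ) +
            (Real.sqrt ((n : ℝ) * m))⁻¹ • centered m W)) γ δ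
        ∂(Measure.pi fun _ : Fin m × Fin m => gaussianReal 0 1)) =
      Φ γ δ + (1 / (n : ℝ)) *
        ((1 / (m : ℝ)) * Φ.trace -
          (1 / (m : ℝ) ^ 2) * ∑ α : Fin m, ∑ β : Fin m, Φ α β) *
        (if γ = δ then (1 : ℝ) else 0) := by
  have hμ : MemLp id 2 (gaussianReal 0 1) := memLp_id_gaussianReal 2
  have hmean : ∫ y, y ∂gaussianReal 0 1 = 0 := integral_id_gaussianReal
  have hvar : ∫ y, y ^ 2 ∂gaussianReal 0 1 = 1 := by simp [integral_sq_gaussianReal]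
  set c := (Real.sqrt ((n : ℝ) * m))⁻¹ with hc
  have hc2 : c ^ 2 = 1 / n * (1 / m) := by
    rw [hc, inv_pow, Real.sq_sqrt (by positivity)]
    ring
  have hcov (i j : Fin m) :
      ∫ W : Fin m × Fin m → ℝ, c * centered m W i γ * (c * centered m W j δ)
          ∂(Measure.pi fun _ => gaussianReal 0 1) =
        c ^ 2 * if γ = δ then centeringMatrix m i j else 0 := by
    simp_rw [mul_mul_mul_comm c _ c, integral_const_mul,
      integral_centered_apply_mul_centered_apply hμ hmean hvar, ← pow_two]
  rw [integral_one_add_transpose_mul_mul_one_add_apply (fun W => c • centered m W)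
    (fun i j => (memLp_centered_apply hμ i j).const_mul c)
    (fun i j => by simp [integral_const_mul, integral_centered_apply hμ hmean])]
  simp only [Matrix.smul_apply, smul_eq_mul, hcov]
  split_ifs
  · have hsum : ∑ i, ∑ j, Φ i j * (c ^ 2 * centeringMatrix m i j) =
        c ^ 2 * ∑ i, ∑ j, Φ i j * centeringMatrix m i j := by
      simp only [Finset.mul_sum, mul_left_comm]
    rw [hsum, sum_mul_centeringMatrix_apply, hc2]
    ring
  · simp

theorem expectation_mixing_conjugation (n m : ℕ) (hn : 1 ≤ n) (hm : 1 ≤ m)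
    (Φ : Matrix (Fin m) (Fin m) ℝ) (γ δ : Fin m) :
    (∫ W : Fin m × Fin m → ℝ,
        (((1 : Matrix (Fin m) (Fin m) ℝ) +
            (Real.sqrt ((n : ℝ) * m))⁻¹ • centered m W)ᵀ * Φ *
          ((1 : Matrix (Fin m) (Fin m) ℝ) +
            (Real.sqrt ((n : ℝ) * m))⁻¹ • centered m W)) γ δ
        ∂(Measure.pi fun _ : Fin m × Fin m => gaussianReal 0 1)) =
      Φ γ δ + (1 / (n : ℝ)) *
        ((1 / (m : ℝ)) * Φ.trace -
          (1 / (m : ℝ) ^ 2) * ∑ α : Fin m, ∑ β : Fin m, Φ α β) *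
        (if γ = δ then (1 : ℝ) else 0) :=
  expectation_mixing_conjugation_general n m Φ γ δ
end

section
/- Let m ≥ 1, let Φ ∈ ℝ^{m×m} be a fixed symmetric matrix, and let W be a random m×m real matrix with i.i.d. standard Gaussian N(0,1) entries. Let W̄ be the matrix with entries W̄_{μα} = (1/m)·Σ_{ν=1}^m W_{να}, set W̃ = W − W̄, and define the random matrix G = W̃ᵀ Φ + Φ W̃. Then for all indices α, β, γ, δ: (1/m)·E[G_{αβ}·G_{γδ}] = δ_{αγ}·C(Φ^{•β}, Φ^{•δ}) + δ_{αδ}·C(Φ^{•β}, Φ^{•γ}) + δ_{γβ}·C(Φ^{•δ}, Φ^{•α}) + δ_{βδ}·C(Φ^{•α}, Φ^{•γ}), where Φ^{•β} ∈ ℝ^m denotes the β-th column of Φ, C(u, v) = (1/m)·Σ_{α=1}^m u_α v_α − ū·v̄, and ū = (1/m)·Σ_{α=1}^m u_α. -/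
open MeasureTheory ProbabilityTheory Matrix

/-- `C(u,v) = (1/m)·⟨u,v⟩ − ū·v̄`, the empirical covariance of two vectors. -/
noncomputable def covC {m : ℕ} (u v : Fin m → ℝ) : ℝ :=
  (1 / (m : ℝ)) * ∑ i : Fin m, u i * v i -
    ((1 / (m : ℝ)) * ∑ i : Fin m, u i) * ((1 / (m : ℝ)) * ∑ i : Fin m, v i)

/-!
Write `Ψ` for `Φ` with centred columns. Centring is self-adjoint and `Φ` is symmetric, so
`G_{αβ} = ⟨Ψ_{•β} e_αᵀ + Ψ_{•α} e_βᵀ, W⟩` is a linear form in the entries of `W`. For i.i.d.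
centred coordinates `E[⟨A, W⟩⟨B, W⟩] = Σ_k A_k B_k E[W_k²]`, which for standard Gaussians is the
Frobenius product `⟨A, B⟩`. The Frobenius products of the rank-one matrices above produce the four
Kronecker deltas, and `(1/m)⟨Ψ_{•β}, Ψ_{•δ}⟩ = C(Φ^{•β}, Φ^{•δ})`.
-/

section Pi

variable {ι : Type*} [Fintype ι] {μ : ι → Measure ℝ} [∀ i, IsProbabilityMeasure (μ i)]

lemma integral_eval_mul_eval_pi [DecidableEq ι] (hμ₀ : ∀ i, ∫ t, t ∂μ i = 0) (i j : ι) :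
    ∫ x, x i * x j ∂Measure.pi μ = if i = j then ∫ t, t ^ 2 ∂μ i else 0 := by
  split_ifs with hij
  · subst hij
    simp_rw [← sq]
    exact integral_comp_eval (μ := μ) (continuous_pow 2).aestronglyMeasurable
  · have hindep :=
      (iIndepFun_pi (X := fun _ => id) fun i => aemeasurable_id (μ := μ i)).indepFun hij
    have hmul := hindep.integral_mul_eq_mul_integral
      (continuous_apply i).aestronglyMeasurable (continuous_apply j).aestronglyMeasurable
    simp only [id, Pi.mul_def] at hmul
    rw [hmul, integral_eval, hμ₀, zero_mul]

lemma integral_sum_mul_sum_pi (hμ : ∀ i, MemLp id 2 (μ i)) (hμ₀ : ∀ i, ∫ t, t ∂μ i = 0)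
    (A B : ι → ℝ) :
    ∫ x, (∑ i, A i * x i) * (∑ i, B i * x i) ∂Measure.pi μ =
      ∑ i, A i * B i * ∫ t, t ^ 2 ∂μ i := by
  classical
  have hprod (i j : ι) : Integrable (fun x : ι → ℝ => A i * B j * (x i * x j)) (Measure.pi μ) :=
    (((hμ i).comp_measurePreserving (measurePreserving_eval μ i)).integrable_mul
      ((hμ j).comp_measurePreserving (measurePreserving_eval μ j))).const_mul _
  simp_rw [Finset.sum_mul_sum, mul_mul_mul_comm (A _)]
  rw [integral_finsetSum _ fun i _ => integrable_finsetSum _ fun j _ => hprod i j]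
  refine Finset.sum_congr rfl fun i _ => ?_
  rw [integral_finsetSum _ fun j _ => hprod i j]
  simp [integral_const_mul, integral_eval_mul_eval_pi hμ₀]

end Pi

lemma integral_sq_gaussianReal_zero (v : NNReal) : ∫ t, t ^ 2 ∂gaussianReal 0 v = v := by
  rw [← variance_fun_id_gaussianReal (μ := 0) (v := v),
    variance_of_integral_eq_zero measurable_id'.aemeasurable integral_id_gaussianReal]

lemma integral_sum_mul_sum_pi_gaussianReal {ι : Type*} [Fintype ι] (A B : ι → ℝ) :
    ∫ x, (∑ i, A i * x i) * (∑ i, B i * x i) ∂Measure.pi (fun _ : ι => gaussianReal 0 1) =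
      ∑ i, A i * B i := by
  simp [integral_sum_mul_sum_pi (fun _ => memLp_id_gaussianReal 2)
    (fun _ => integral_id_gaussianReal), integral_sq_gaussianReal_zero]

section SingleCol

variable {ι κ : Type*} [Fintype ι] [Fintype κ] [DecidableEq κ]

def singleCol (a : κ) (u : ι → ℝ) (k : ι × κ) : ℝ := if k.2 = a then u k.1 else 0

lemma sum_singleCol_mul (a : κ) (u : ι → ℝ) (W : ι × κ → ℝ) :
    ∑ k, singleCol a u k * W k = ∑ i, u i * W (i, a) := by
  simp [singleCol, Fintype.sum_prod_type, ite_mul]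

lemma sum_singleCol_mul_singleCol (a c : κ) (u v : ι → ℝ) :
    ∑ k, singleCol a u k * singleCol c v k = (if a = c then 1 else 0) * ∑ i, u i * v i := by
  rw [sum_singleCol_mul]
  split_ifs with h <;> simp [singleCol, h]

end SingleCol

lemma covC_comm {m : ℕ} (u v : Fin m → ℝ) : covC u v = covC v u := by
  simp only [covC, mul_comm (u _), mul_comm (1 / (m : ℝ) * ∑ i, u i)]

lemma one_div_mul_sum_centered_mul_centered {m : ℕ} (X : Fin m × Fin m → ℝ) (b d : Fin m) :
    1 / (m : ℝ) * ∑ ρ, centered m X ρ b * centered m X ρ d =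
      covC (fun i => X (i, b)) (fun i => X (i, d)) := by
  rcases Nat.eq_zero_or_pos m with rfl | hm
  · simp [covC]
  simp only [centered, of_apply, covC, sub_mul, mul_sub, Finset.sum_sub_distrib,
    ← Finset.sum_mul, ← Finset.mul_sum, Finset.sum_const, Finset.card_univ, Fintype.card_fin,
    nsmul_eq_mul]
  field_simp
  ring

lemma sum_centered_mul {m : ℕ} (W X : Fin m × Fin m → ℝ) (a b : Fin m) :
    ∑ ρ, centered m W ρ a * X (ρ, b) = ∑ ρ, W (ρ, a) * centered m X ρ b := by
  simp only [centered, of_apply, sub_mul, mul_sub, Finset.sum_sub_distrib, ← Finset.sum_mul,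
    ← Finset.mul_sum]
  ring

lemma transpose_centered_mul_add_mul_centered_apply {m : ℕ} {Φ : Matrix (Fin m) (Fin m) ℝ}
    (hΦ : Φ.IsSymm) (W : Fin m × Fin m → ℝ) (a b : Fin m) :
    ((centered m W)ᵀ * Φ + Φ * centered m W) a b =
      ∑ k, (singleCol a (fun ρ => centered m (fun k => Φ k.1 k.2) ρ b) +
        singleCol b (fun ρ => centered m (fun k => Φ k.1 k.2) ρ a)) k * W k := by
  have h (c d : Fin m) :
      ∑ ρ, centered m W ρ c * Φ ρ d = ∑ ρ, centered m (fun k => Φ k.1 k.2) ρ d * W (ρ, c) :=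
    (sum_centered_mul W (fun k => Φ k.1 k.2) c d).trans
      (Finset.sum_congr rfl fun _ _ => mul_comm _ _)
  simp only [Pi.add_apply, add_mul, Finset.sum_add_distrib, sum_singleCol_mul, Matrix.add_apply,
    mul_apply, transpose_apply, ← hΦ.apply a, mul_comm (Φ _ a), h]

theorem mixit_diffusion_coefficient_general (m : ℕ)
    (Φ : Matrix (Fin m) (Fin m) ℝ) (hΦ : Φ.IsSymm) (α β γ δ : Fin m) :
    (1 / (m : ℝ)) *
      (∫ W : Fin m × Fin m → ℝ,
          ((centered m W)ᵀ * Φ + Φ * centered m W) α β *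
            ((centered m W)ᵀ * Φ + Φ * centered m W) γ δ
          ∂(Measure.pi fun _ : Fin m × Fin m => gaussianReal 0 1)) =
      (if α = γ then (1 : ℝ) else 0) *
          covC (fun i => Φ i β) (fun i => Φ i δ) +
        (if α = δ then (1 : ℝ) else 0) *
          covC (fun i => Φ i β) (fun i => Φ i γ) +
        (if γ = β then (1 : ℝ) else 0) *
          covC (fun i => Φ i δ) (fun i => Φ i α) +
        (if β = δ then (1 : ℝ) else 0) *
          covC (fun i => Φ i α) (fun i => Φ i γ) := by
  simp only [transpose_centered_mul_add_mul_centered_apply hΦ]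
  rw [integral_sum_mul_sum_pi_gaussianReal]
  simp only [Pi.add_apply, add_mul, mul_add, Finset.sum_add_distrib, sum_singleCol_mul_singleCol]
  rw [covC_comm (fun i => Φ i δ)]
  simp only [@eq_comm _ γ β, mul_left_comm (1 / (m : ℝ)), one_div_mul_sum_centered_mul_centered]
  ring

theorem mixit_diffusion_coefficient (m : ℕ) (hm : 1 ≤ m)
    (Φ : Matrix (Fin m) (Fin m) ℝ) (hΦ : Φ.IsSymm) (α β γ δ : Fin m) :
    (1 / (m : ℝ)) *
      (∫ W : Fin m × Fin m → ℝ,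
          ((centered m W)ᵀ * Φ + Φ * centered m W) α β *
            ((centered m W)ᵀ * Φ + Φ * centered m W) γ δ
          ∂(Measure.pi fun _ : Fin m × Fin m => gaussianReal 0 1)) =
      (if α = γ then (1 : ℝ) else 0) *
          covC (fun i => Φ i β) (fun i => Φ i δ) +
        (if α = δ then (1 : ℝ) else 0) *
          covC (fun i => Φ i β) (fun i => Φ i γ) +
        (if γ = β then (1 : ℝ) else 0) *
          covC (fun i => Φ i δ) (fun i => Φ i α) +
        (if β = δ then (1 : ℝ) else 0) *
          covC (fun i => Φ i α) (fun i => Φ i γ) :=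
  mixit_diffusion_coefficient_general m Φ hΦ α β γ δ
end

section
/- Let m ≥ 1 and let Φ, V ∈ ℝ^{m×m} be symmetric matrices. Define, for indices α, β, γ, δ, the quantity Σ^M(Φ)^{αβ,γδ} = δ_{αγ}·C(Φ^{•β}, Φ^{•δ}) + δ_{αδ}·C(Φ^{•β}, Φ^{•γ}) + δ_{γβ}·C(Φ^{•δ}, Φ^{•α}) + δ_{βδ}·C(Φ^{•α}, Φ^{•γ}), where Φ^{•β} is the β-th column of Φ, C(u, v) = (1/m)·Σ_{α=1}^m u_α v_α − ū·v̄, and ū = (1/m)·Σ_{α=1}^m u_α. Then the quadratic form is positive semidefinite: Σ_{α,β,γ,δ=1}^m Σ^M(Φ)^{αβ,γδ} · V_{αβ} · V_{γδ} ≥ 0. -/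
open Matrix

/-- The mixing-matrix contribution `Σ^M(Φ)^{αβ,γδ}` to the diffusion
coefficient of the MixiT covariance SDE. -/
noncomputable def SigmaM {m : ℕ} (Φ : Matrix (Fin m) (Fin m) ℝ)
    (α β γ δ : Fin m) : ℝ :=
  (if α = γ then (1 : ℝ) else 0) * covC (fun i => Φ i β) (fun i => Φ i δ) +
    (if α = δ then (1 : ℝ) else 0) * covC (fun i => Φ i β) (fun i => Φ i γ) +
    (if γ = β then (1 : ℝ) else 0) * covC (fun i => Φ i δ) (fun i => Φ i α) +
    (if β = δ then (1 : ℝ) else 0) * covC (fun i => Φ i α) (fun i => Φ i γ)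

/-- Auxiliary: a Gram-type triple sum `∑_{x,y,z} ⟨c_y, c_z⟩ v_{xy} v_{xz}`
is nonnegative, being a sum of squares. -/
lemma helperPSD {m : ℕ} (c v : Fin m → Fin m → ℝ) :
    0 ≤ ∑ x : Fin m, ∑ y : Fin m, ∑ z : Fin m,
        (∑ i : Fin m, c i y * c i z) * (v x y * v x z) := by
  refine Finset.sum_nonneg fun x _ => ?_
  have h : ∑ y : Fin m, ∑ z : Fin m, (∑ i : Fin m, c i y * c i z) * (v x y * v x z)
      = ∑ i : Fin m, (∑ y : Fin m, c i y * v x y) ^ 2 := by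
    calc ∑ y : Fin m, ∑ z : Fin m, (∑ i : Fin m, c i y * c i z) * (v x y * v x z)
        = ∑ y : Fin m, ∑ z : Fin m, ∑ i : Fin m, (c i y * v x y) * (c i z * v x z) := by
          refine Finset.sum_congr rfl fun y _ => Finset.sum_congr rfl fun z _ => ?_
          rw [Finset.sum_mul]
          exact Finset.sum_congr rfl fun i _ => by ring
      _ = ∑ y : Fin m, ∑ i : Fin m, ∑ z : Fin m, (c i y * v x y) * (c i z * v x z) :=
          Finset.sum_congr rfl fun y _ => Finset.sum_comm
      _ = ∑ i : Fin m, ∑ y : Fin m, ∑ z : Fin m, (c i y * v x y) * (c i z * v x z) :=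
          Finset.sum_comm
      _ = ∑ i : Fin m, (∑ y : Fin m, c i y * v x y) ^ 2 := by
          refine Finset.sum_congr rfl fun i _ => ?_
          rw [sq, Finset.sum_mul_sum]
  rw [h]
  exact Finset.sum_nonneg fun i _ => sq_nonneg _

/-- Variant of `helperPSD` with a nonnegative scalar factor. -/
lemma helperPSD' {m : ℕ} (r : ℝ) (hr : 0 ≤ r) (c v : Fin m → Fin m → ℝ) :
    0 ≤ ∑ x : Fin m, ∑ y : Fin m, ∑ z : Fin m,
        (r * ∑ i : Fin m, c i y * c i z) * v x y * v x z := by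
  have h : ∑ x : Fin m, ∑ y : Fin m, ∑ z : Fin m,
        (r * ∑ i : Fin m, c i y * c i z) * v x y * v x z
      = r * ∑ x : Fin m, ∑ y : Fin m, ∑ z : Fin m,
          (∑ i : Fin m, c i y * c i z) * (v x y * v x z) := by
    rw [Finset.mul_sum]
    refine Finset.sum_congr rfl fun x _ => ?_
    rw [Finset.mul_sum]
    refine Finset.sum_congr rfl fun y _ => ?_
    rw [Finset.mul_sum]
    exact Finset.sum_congr rfl fun z _ => by ring
  rw [h]
  exact mul_nonneg hr (helperPSD c v)

theorem sigmaM_posSemidef (m : ℕ) (hm : 1 ≤ m)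
    (Φ V : Matrix (Fin m) (Fin m) ℝ) (hΦ : Φ.IsSymm) (hV : V.IsSymm) :
    0 ≤ ∑ α : Fin m, ∑ β : Fin m, ∑ γ : Fin m, ∑ δ : Fin m,
        SigmaM Φ α β γ δ * V α β * V γ δ := by
  have hm' : (m : ℝ) ≠ 0 := Nat.cast_ne_zero.mpr (by omega)
  have hmpos : (0:ℝ) ≤ 1 / m := by positivity
  -- centered columns of Φ
  obtain ⟨c, hc⟩ : ∃ c : Fin m → Fin m → ℝ,
      c = fun i β => Φ i β - (1 / (m:ℝ)) * ∑ j : Fin m, Φ j β := ⟨_, rfl⟩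
  have hVs : ∀ a b, V a b = V b a := fun a b => hV.apply b a
  -- the covariance is the inner product of centered columns
  have hG : ∀ β δ : Fin m, covC (fun i => Φ i β) (fun i => Φ i δ)
      = (1 / (m:ℝ)) * ∑ i : Fin m, c i β * c i δ := by
    intro β δ
    have h1 : ∀ i : Fin m, c i β * c i δ =
        Φ i β * Φ i δ - ((1/(m:ℝ)) * ∑ j : Fin m, Φ j δ) * Φ i β
        - ((1/(m:ℝ)) * ∑ j : Fin m, Φ j β) * Φ i δ
        + ((1/(m:ℝ)) * ∑ j : Fin m, Φ j β) * ((1/(m:ℝ)) * ∑ j : Fin m, Φ j δ) := fun i => by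
      simp only [hc]; ring
    simp only [covC]
    rw [Finset.sum_congr rfl fun i _ => h1 i]
    simp only [Finset.sum_add_distrib, Finset.sum_sub_distrib, ← Finset.mul_sum,
      Finset.sum_const, Finset.card_univ, Fintype.card_fin, nsmul_eq_mul]
    field_simp
    ring
  -- collapse the Kronecker deltas
  simp only [SigmaM, add_mul, ite_mul, one_mul, zero_mul, Finset.sum_add_distrib,
    Finset.sum_ite_irrel, Finset.sum_const_zero, Finset.sum_ite_eq, Finset.sum_ite_eq',
    Finset.mem_univ, if_true, hG]
  have hGsym : ∀ a b : Fin m, ∑ i : Fin m, c i a * c i b = ∑ i : Fin m, c i b * c i a :=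
    fun a b => Finset.sum_congr rfl fun i _ => by ring
  have T1 : (0:ℝ) ≤ ∑ α : Fin m, ∑ β : Fin m, ∑ δ : Fin m,
      ((1/(m:ℝ)) * ∑ i : Fin m, c i β * c i δ) * V α β * V α δ :=
    helperPSD' (1/(m:ℝ)) hmpos c (fun a b => V a b)
  have T2 : (0:ℝ) ≤ ∑ α : Fin m, ∑ β : Fin m, ∑ γ : Fin m,
      ((1/(m:ℝ)) * ∑ i : Fin m, c i β * c i γ) * V α β * V γ α := by
    have e : (∑ α : Fin m, ∑ β : Fin m, ∑ γ : Fin m,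
        ((1/(m:ℝ)) * ∑ i : Fin m, c i β * c i γ) * V α β * V γ α)
        = ∑ α : Fin m, ∑ β : Fin m, ∑ γ : Fin m,
        ((1/(m:ℝ)) * ∑ i : Fin m, c i β * c i γ) * V α β * V α γ :=
      Finset.sum_congr rfl fun α _ => Finset.sum_congr rfl fun β _ =>
        Finset.sum_congr rfl fun γ _ => by rw [hVs γ α]
    rw [e]
    exact helperPSD' (1/(m:ℝ)) hmpos c (fun a b => V a b)
  have T3 : (0:ℝ) ≤ ∑ α : Fin m, ∑ β : Fin m, ∑ δ : Fin m,
      ((1/(m:ℝ)) * ∑ i : Fin m, c i δ * c i α) * V α β * V β δ := by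
    rw [Finset.sum_comm]
    have e : (∑ β : Fin m, ∑ α : Fin m, ∑ δ : Fin m,
        ((1/(m:ℝ)) * ∑ i : Fin m, c i δ * c i α) * V α β * V β δ)
        = ∑ β : Fin m, ∑ α : Fin m, ∑ δ : Fin m,
        ((1/(m:ℝ)) * ∑ i : Fin m, c i α * c i δ) * V α β * V δ β :=
      Finset.sum_congr rfl fun β _ => Finset.sum_congr rfl fun α _ =>
        Finset.sum_congr rfl fun δ _ => by rw [hGsym δ α, hVs β δ]
    rw [e]
    exact helperPSD' (1/(m:ℝ)) hmpos c (fun a b => V b a)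
  have T4 : (0:ℝ) ≤ ∑ α : Fin m, ∑ β : Fin m, ∑ γ : Fin m,
      ((1/(m:ℝ)) * ∑ i : Fin m, c i α * c i γ) * V α β * V γ β := by
    rw [Finset.sum_comm]
    exact helperPSD' (1/(m:ℝ)) hmpos c (fun a b => V b a)
  have := add_nonneg (add_nonneg (add_nonneg T1 T2) T3) T4
  linarith [this]
end
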